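/- Let m ≥ 2 and let q_1 < q_2 < ⋯ < q_m be real numbers. Define Ψ : [q_1, q_m] → ℝ by Ψ(z) = min_{1≤j≤m} |z − q_j|. Suppose λ ≥ (1/2)·max_{1≤k≤m−1}(q_{k+1} − q_k). Then for every x ∈ [q_1, q_m] and every p ∈ {q_1, …, q_m} with |x − p| = min_{1≤j≤m} |x − q_j| (i.e., p is a nearest quantization value to x), the point p is a global minimizer of Φ(z) = λΨ(z) + (1/2)(z − x)² over [q_1, q_m]. In other words, once λ exceeds half the maximum gap between consecutive quantization values, the proximal mapping of λΨ reduces to the exact nearest-point quantizer prox_{λΨ}(x) = argmin_{p ∈ Q} |x − p|. -/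

import Mathlib

/-!
Write `a = |x - p|` for the distance from `x` to the grid. Since `x` lies between two consecutive
grid points at distance at most `2λ`, one of them is within `λ`, so `a ≤ λ`. For `z` with nearest
grid point `q j`, the triangle inequality gives `a ≤ |x - z| + Ψ z`, and then
`a² / 2 ≤ a (a - |x - z|) + |x - z|² / 2 ≤ λ Ψ z + |x - z|² / 2 = Φ z`, while `Φ p = a² / 2`.
-/

theorem exists_le_le_succ_of_mem_Icc {α : Type*} [LinearOrder α] (q : ℕ → α) {m : ℕ}
    (hm : 1 ≤ m) {x : α} (hx : x ∈ Set.Icc (q 0) (q m)) :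
    ∃ k < m, q k ≤ x ∧ x ≤ q (k + 1) := by
  induction m with
  | zero => omega
  | succ n ih =>
    rcases le_or_gt x (q n) with hxn | hnx
    · rcases Nat.eq_zero_or_pos n with rfl | hn
      · exact ⟨0, Nat.one_pos, hx⟩
      · obtain ⟨k, hk, hkx, hxk⟩ := ih hn ⟨hx.1, hxn⟩
        exact ⟨k, by omega, hkx, hxk⟩
    · exact ⟨n, n.lt_succ_self, hnx.le, hx.2⟩

theorem abs_sub_le_of_isNearest_of_gap_le (q : ℕ → ℝ) {m : ℕ} (hm : 1 ≤ m) {lam : ℝ}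
    (hgap : ∀ k < m, q (k + 1) - q k ≤ 2 * lam) {x : ℝ} (hx : x ∈ Set.Icc (q 0) (q m)) {p : ℝ}
    (hnear : ∀ j ≤ m, |x - p| ≤ |x - q j|) :
    |x - p| ≤ lam := by
  obtain ⟨k, hk, hkx, hxk⟩ := exists_le_le_succ_of_mem_Icc q hm hx
  have hleft : |x - p| ≤ x - q k := (hnear k hk.le).trans_eq (abs_of_nonneg (sub_nonneg.2 hkx))
  have hright : |x - p| ≤ q (k + 1) - x :=
    (hnear (k + 1) hk).trans_eq (abs_sub_comm x _ ▸ abs_of_nonneg (sub_nonneg.2 hxk))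
  linarith [hgap k hk]

theorem half_sq_le_mul_add_half_sq {a c t lam : ℝ} (ha : 0 ≤ a) (hc : 0 ≤ c) (hlam : a ≤ lam)
    (hact : a ≤ t + c) :
    a ^ 2 / 2 ≤ lam * c + t ^ 2 / 2 :=
  calc a ^ 2 / 2 ≤ a * (a - t) + t ^ 2 / 2 := by nlinarith [sq_nonneg (a - t)]
    _ ≤ a * c + t ^ 2 / 2 := by gcongr; linarith
    _ ≤ lam * c + t ^ 2 / 2 := by gcongr

theorem prox_nonconvex_par_hard_quantizer
    (m : ℕ) (hm : 1 ≤ m)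
    (q : ℕ → ℝ)
    (Ψ : ℝ → ℝ)
    (hΨ : ∀ z : ℝ, (∃ j ≤ m, Ψ z = |z - q j|) ∧ (∀ j ≤ m, Ψ z ≤ |z - q j|))
    (lam : ℝ) (hlam : ∀ k < m, q (k + 1) - q k ≤ 2 * lam)
    (x : ℝ) (hx : x ∈ Set.Icc (q 0) (q m))
    (p : ℝ) (hp : ∃ j ≤ m, p = q j) (hnear : ∀ j ≤ m, |x - p| ≤ |x - q j|)
    (Φ : ℝ → ℝ) (hΦ : ∀ z, Φ z = lam * Ψ z + (1 / 2) * (z - x) ^ 2) :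
    ∀ z ∈ Set.Icc (q 0) (q m), Φ p ≤ Φ z := by
  intro z _
  have hΨ_nonneg (y : ℝ) : 0 ≤ Ψ y := by
    obtain ⟨j, -, hj⟩ := (hΨ y).1
    exact hj ▸ abs_nonneg _
  have hΨp : Ψ p = 0 := by
    obtain ⟨jp, hjp, rfl⟩ := hp
    exact le_antisymm (by simpa using (hΨ (q jp)).2 jp hjp) (hΨ_nonneg _)
  obtain ⟨j, hj, hΨz⟩ := (hΨ z).1
  have hreach : |x - p| ≤ |x - z| + Ψ z :=
    calc |x - p| ≤ |x - q j| := hnear j hj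
      _ ≤ |x - z| + |z - q j| := abs_sub_le x z (q j)
      _ = |x - z| + Ψ z := by rw [hΨz]
  have key := half_sq_le_mul_add_half_sq (abs_nonneg _) (hΨ_nonneg z)
    (abs_sub_le_of_isNearest_of_gap_le q hm hlam hx hnear) hreach
  rw [abs_sub_comm x p, abs_sub_comm x z, sq_abs, sq_abs] at key
  rw [hΦ p, hΦ z, hΨp]
  linarith
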